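/- arXiv:1212.3799 — 3 statements merged into one kernel-verified Lean document; each statement's English description precedes it below -/
import Mathlib

section
/- Let N ≥ 1 and let α ∈ ℝ^N be a unit vector. Set Q = N^{−1/2} · Σ_{k=1}^N r_k α_k, where r_1,…,r_N are independent Rademacher random variables. Then for every h with 0 ≤ h < N/2, E(exp(h·Q²)) ≤ 1/√(1 − 2h/N). -/
open MeasureTheory Finset

noncomputable section

/-- The real sign value of a Boolean. -/
def rad (b : Bool) : ℝ := if b then 1 else -1

/-- The uniform probability measure on Boolean vectors, making the coordinates
independent Rademacher random variables. -/
def μrow (N : ℕ) : Measure (Fin N → Bool) :=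
  (PMF.uniformOfFintype (Fin N → Bool)).toMeasure

/-!
Linearise the square by the Hubbard–Stratonovich identity
`exp (h q²) = 𝔼_g exp (√(2h) q g)`, `g` a standard Gaussian, and exchange the two expectations.
For fixed `g` the Rademacher sum is sub-Gaussian, `𝔼 exp (t q) = ∏ cosh (t α_k / √N) ≤ exp (t² / 2N)`,
so what remains is the Gaussian integral `𝔼_g exp (h g² / N) = (1 - 2h/N)^(-1/2)`.
-/

open Real

theorem integral_integral_swap_of_fintype {Ω β E : Type*} [Fintype Ω] [MeasurableSpace Ω]
    [MeasurableSingletonClass Ω] [MeasurableSpace β]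
    [NormedAddCommGroup E] [NormedSpace ℝ E] [CompleteSpace E]
    {μ : Measure Ω} [IsFiniteMeasure μ] {ν : Measure β} {G : Ω → β → E}
    (hG : ∀ ω, Integrable (G ω) ν) :
    ∫ ω, ∫ x, G ω x ∂ν ∂μ = ∫ x, ∫ ω, G ω x ∂μ ∂ν := by
  simp only [integral_fintype, Integrable.of_finite]
  rw [integral_finsetSum]
  · simp_rw [integral_smul]
  · exact fun ω _ => (hG ω).smul (μ.real {ω})

theorem exp_neg_mul_sq_add_mul {b : ℝ} (hb : b ≠ 0) (c x : ℝ) :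
    exp (-b * x ^ 2 + c * x) = exp (c ^ 2 / (4 * b)) * exp (-b * (x - c / (2 * b)) ^ 2) := by
  rw [← exp_add]
  congr 1
  field_simp
  ring

theorem integrable_exp_neg_mul_sq_add_mul {b : ℝ} (hb : 0 < b) (c : ℝ) :
    Integrable fun x => exp (-b * x ^ 2 + c * x) := by
  simp_rw [exp_neg_mul_sq_add_mul hb.ne']
  exact ((integrable_exp_neg_mul_sq hb).comp_sub_right _).const_mul _

theorem integral_exp_neg_mul_sq_add_mul {b : ℝ} (hb : 0 < b) (c : ℝ) :
    ∫ x, exp (-b * x ^ 2 + c * x) = √(π / b) * exp (c ^ 2 / (4 * b)) := by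
  simp_rw [exp_neg_mul_sq_add_mul hb.ne']
  rw [integral_const_mul, integral_sub_right_eq_self (fun x => exp (-b * x ^ 2)),
    integral_gaussian, mul_comm]

theorem exp_sq_div_two_eq_integral (y : ℝ) :
    exp (y ^ 2 / 2) = (√(2 * π))⁻¹ * ∫ x, exp (-(1 / 2) * x ^ 2 + y * x) := by
  rw [integral_exp_neg_mul_sq_add_mul one_half_pos, div_div_eq_mul_div, div_one, mul_comm π,
    ← mul_assoc, inv_mul_cancel₀ (by positivity), one_mul]
  norm_num

theorem integral_exp_mul_sq_le_of_mgf_le {Ω : Type*} [Fintype Ω] [MeasurableSpace Ω]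
    [MeasurableSingletonClass Ω] {μ : Measure Ω} [IsFiniteMeasure μ] {q : Ω → ℝ} {v : ℝ}
    (hq : ∀ t, ∫ ω, exp (t * q ω) ∂μ ≤ exp (v * t ^ 2 / 2)) {h : ℝ} (h0 : 0 ≤ h)
    (hv : h * v < 1 / 2) :
    ∫ ω, exp (h * q ω ^ 2) ∂μ ≤ 1 / √(1 - 2 * h * v) := by
  set s := √(2 * h)
  have hs : s ^ 2 = 2 * h := sq_sqrt (by positivity)
  have hb : 0 < 1 / 2 - h * v := by linarith
  have gaussian_repr : ∀ ω, exp (h * q ω ^ 2)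
      = (√(2 * π))⁻¹ * ∫ x, exp (-(1 / 2) * x ^ 2 + s * q ω * x) := fun ω => by
    rw [← exp_sq_div_two_eq_integral, mul_pow, hs]
    ring_nf
  have mixture_le : ∀ x, ∫ ω, exp (-(1 / 2) * x ^ 2 + s * q ω * x) ∂μ
      ≤ exp (-(1 / 2 - h * v) * x ^ 2) := fun x =>
    calc ∫ ω, exp (-(1 / 2) * x ^ 2 + s * q ω * x) ∂μ
        = exp (-(1 / 2) * x ^ 2) * ∫ ω, exp (s * x * q ω) ∂μ := by
          rw [← integral_const_mul]
          simp_rw [← exp_add, mul_right_comm]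
      _ ≤ exp (-(1 / 2) * x ^ 2) * exp (v * (s * x) ^ 2 / 2) := by gcongr; exact hq _
      _ = exp (-(1 / 2 - h * v) * x ^ 2) := by
          rw [← exp_add, mul_pow, hs]
          ring_nf
  calc ∫ ω, exp (h * q ω ^ 2) ∂μ
      = (√(2 * π))⁻¹ * ∫ ω, (∫ x, exp (-(1 / 2) * x ^ 2 + s * q ω * x)) ∂μ := by
        simp_rw [gaussian_repr, integral_const_mul]
    _ = (√(2 * π))⁻¹ * ∫ x, ∫ ω, exp (-(1 / 2) * x ^ 2 + s * q ω * x) ∂μ := by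
        rw [integral_integral_swap_of_fintype fun ω =>
          integrable_exp_neg_mul_sq_add_mul one_half_pos _]
    _ ≤ (√(2 * π))⁻¹ * ∫ x, exp (-(1 / 2 - h * v) * x ^ 2) := by
        refine mul_le_mul_of_nonneg_left ?_ (by positivity)
        exact integral_mono_of_nonneg (.of_forall fun x => integral_nonneg fun ω => (exp_pos _).le)
          (integrable_exp_neg_mul_sq hb) (.of_forall mixture_le)
    _ = 1 / √(1 - 2 * h * v) := by
        rw [integral_gaussian, show π / (1 / 2 - h * v) = 2 * π / (1 - 2 * h * v) by
          field_simp, sqrt_div' _ (by linarith)]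
        field_simp

instance μrow.instIsProbabilityMeasure {N : ℕ} : IsProbabilityMeasure (μrow N) := by
  unfold μrow
  infer_instance

theorem integral_μrow {N : ℕ} (f : (Fin N → Bool) → ℝ) :
    ∫ ω, f ω ∂μrow N = (2 ^ N)⁻¹ * ∑ ω, f ω := by
  simp [μrow, PMF.integral_eq_sum, Finset.mul_sum]

theorem integral_μrow_exp_sum_mul_rad {N : ℕ} (c : Fin N → ℝ) :
    ∫ ω, exp (∑ k, c k * rad (ω k)) ∂μrow N = ∏ k, cosh (c k) := by
  simp_rw [integral_μrow, exp_sum, ← Fintype.prod_sum fun k b => exp (c k * rad b), cosh_eq]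
  simp [rad, Finset.prod_div_distrib, inv_mul_eq_div]

theorem integral_μrow_exp_mul_sum_rad_mul_le {N : ℕ} (a : Fin N → ℝ) (t : ℝ) :
    ∫ ω, exp (t * ∑ k, rad (ω k) * a k) ∂μrow N ≤ exp ((∑ k, a k ^ 2) * t ^ 2 / 2) := by
  calc ∫ ω, exp (t * ∑ k, rad (ω k) * a k) ∂μrow N
      = ∏ k, cosh (t * a k) := by
        rw [← integral_μrow_exp_sum_mul_rad]
        simp_rw [Finset.mul_sum, mul_left_comm t, mul_comm (rad _)]
    _ ≤ ∏ k, exp ((t * a k) ^ 2 / 2) :=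
        Finset.prod_le_prod (fun k _ => (cosh_pos _).le) fun k _ => cosh_le_exp_half_sq _
    _ = exp ((∑ k, a k ^ 2) * t ^ 2 / 2) := by
        rw [← exp_sum, Finset.sum_mul, Finset.sum_div]
        simp_rw [mul_pow, mul_comm]

theorem stmt9_general {N : ℕ} (α : Fin N → ℝ) (hα : ∑ k, (α k) ^ 2 = 1)
    (h : ℝ) (hh0 : 0 ≤ h) (hh : h < (N : ℝ) / 2) :
    (∫ ω, Real.exp (h * ((Real.sqrt N)⁻¹ * ∑ k, rad (ω k) * α k) ^ 2) ∂(μrow N))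
      ≤ 1 / Real.sqrt (1 - 2 * h / N) := by
  have hN0 : (0 : ℝ) < N := by linarith
  have variance : ∑ k, ((√N)⁻¹ * α k) ^ 2 = (N : ℝ)⁻¹ := by
    simp_rw [mul_pow, ← Finset.mul_sum, hα, inv_pow, sq_sqrt hN0.le, mul_one]
  have rescale (ω : Fin N → Bool) :
      (√N)⁻¹ * ∑ k, rad (ω k) * α k = ∑ k, rad (ω k) * ((√N)⁻¹ * α k) := by
    rw [Finset.mul_sum]
    exact Finset.sum_congr rfl fun k _ => mul_left_comm _ _ _
  have mgf_le (t : ℝ) : ∫ ω, exp (t * ((√N)⁻¹ * ∑ k, rad (ω k) * α k)) ∂μrow N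
      ≤ exp ((N : ℝ)⁻¹ * t ^ 2 / 2) := by
    simp_rw [rescale, ← variance]
    exact integral_μrow_exp_mul_sum_rad_mul_le _ t
  have hv : h * (N : ℝ)⁻¹ < 1 / 2 := by
    rw [← div_eq_mul_inv, div_lt_iff₀ hN0]
    linarith
  simpa only [← div_eq_mul_inv] using integral_exp_mul_sq_le_of_mgf_le mgf_le hh0 hv

theorem stmt9 {N : ℕ} (hN : 1 ≤ N) (α : Fin N → ℝ) (hα : ∑ k, (α k) ^ 2 = 1)
    (h : ℝ) (hh0 : 0 ≤ h) (hh : h < (N : ℝ) / 2) :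
    (∫ ω, Real.exp (h * ((Real.sqrt N)⁻¹ * ∑ k, rad (ω k) * α k) ^ 2) ∂(μrow N))
      ≤ 1 / Real.sqrt (1 - 2 * h / N) :=
  stmt9_general α hα h hh0 hh
end
end

section
/- Let Φ be an n × N real matrix, k ≥ 1, and suppose there exists δ with 0 < δ < √2 − 1 such that (1−δ)·‖w‖₂² ≤ ‖Φw‖₂² ≤ (1+δ)·‖w‖₂² for every 2k-sparse vector w ∈ ℝ^N. Then there exists a constant C₀, depending only on δ, such that for every x ∈ ℝ^N, setting y = Φx, any vector x* with Φx* = y and ‖x*‖₁ ≤ ‖z‖₁ for all z with Φz = y satisfies ‖x* − x‖₁ ≤ C₀·‖x − x_{(k)}‖₁ and ‖x* − x‖₂ ≤ C₀·k^{−1/2}·‖x − x_{(k)}‖₁, where x_{(k)} is obtained from x by setting all but the k largest-magnitude entries to zero. -/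
/-!
Candès' argument. Put `h = x* - x`, so that `Φ h = 0`, and `e = ‖x - x_T‖₁`. Minimality of
`‖x*‖₁` gives the cone condition `‖h_{Tᶜ}‖₁ ≤ ‖h_T‖₁ + 2e`. Split `Tᶜ` into blocks `T₁, T₂, …`
of `k` coordinates in order of decreasing `|h|`: every entry of a block is at most the average
of the previous block, so `∑_{i ≥ 2} ‖h_{Tᵢ}‖₂ ≤ k^{-1/2} ‖h_{Tᶜ}‖₁`. By polarization, the RIP
gives `|⟨Φu, Φv⟩| ≤ δ ‖u‖₂ ‖v‖₂` for disjointly supported `k`-sparse `u, v`; applied to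
`‖Φ h_{T ∪ T₁}‖₂² = -∑_{i ≥ 2} ⟨Φ h_{T ∪ T₁}, Φ h_{Tᵢ}⟩` this yields
`‖h_{T ∪ T₁}‖₂ ≤ ρ k^{-1/2} ‖h_{Tᶜ}‖₁` with `ρ = √2 δ / (1 - δ)`, which is `< 1` exactly when
`δ < √2 - 1`. Hence `‖h_T‖₁ ≤ ρ ‖h_{Tᶜ}‖₁`, the cone condition turns this into
`‖h_{Tᶜ}‖₁ ≤ 2e / (1 - ρ)`, and both bounds hold with `C₀ = 2 (1 + ρ) / (1 - ρ)`.
-/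

open Finset Function WithLp Matrix

noncomputable section

-- the Euclidean norm; `ι → ℝ` itself carries the sup norm
local notation "‖" w "‖₂" => ‖WithLp.toLp 2 w‖

namespace SparseRecovery

variable {ι m : Type*} [Fintype ι] [Fintype m]

lemma norm_toLp_sq (w : ι → ℝ) : ‖w‖₂ ^ 2 = ∑ j, w j ^ 2 :=
  EuclideanSpace.real_norm_sq_eq (toLp 2 w)

lemma norm_toLp_eq_sqrt (w : ι → ℝ) : ‖w‖₂ = √(∑ j, w j ^ 2) := by
  rw [← norm_toLp_sq, Real.sqrt_sq (norm_nonneg _)]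

lemma inner_toLp_eq_zero {u v : ι → ℝ} {U V : Finset ι} (hu : support u ⊆ U)
    (hv : support v ⊆ V) (hUV : Disjoint U V) : inner ℝ (toLp 2 u) (toLp 2 v) = 0 := by
  rw [PiLp.inner_apply]
  refine Finset.sum_eq_zero fun j _ => ?_
  by_cases hj : j ∈ U
  · simp [notMem_support.mp fun h => disjoint_left.mp hUV hj (hv h)]
  · simp [notMem_support.mp fun h => hj (hu h)]

lemma card_filter_ne_zero_le {w : ι → ℝ} {U : Finset ι} (hw : support w ⊆ U) :
    #{j | w j ≠ 0} ≤ #U :=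
  card_le_card fun j hj => hw (by simpa using hj)

lemma norm_indicator_sq (T : Finset ι) (w : ι → ℝ) :
    ‖(T : Set ι).indicator w‖₂ ^ 2 = ∑ j ∈ T, w j ^ 2 := by
  rw [norm_toLp_sq, ← Finset.sum_indicator_subset _ (subset_univ T)]
  refine Finset.sum_congr rfl fun j _ => ?_
  by_cases hj : j ∈ T <;> simp [hj]

lemma sum_abs_le_sqrt_card_mul_norm (T : Finset ι) (w : ι → ℝ) :
    ∑ j ∈ T, |w j| ≤ √(#T : ℝ) * ‖(T : Set ι).indicator w‖₂ := by
  have := Real.sum_mul_le_sqrt_mul_sqrt T (fun _ => 1) (fun j => |w j|)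
  simpa [sq_abs, ← norm_indicator_sq, Real.sqrt_sq (norm_nonneg _)] using this

lemma norm_indicator_le_of_abs_le {g : ι → ℝ} {C B : Finset ι} {k : ℕ} (hk : 0 < k)
    (hC : #C ≤ k) (hB : k ≤ #B) (hCB : ∀ c ∈ C, ∀ b ∈ B, |g c| ≤ |g b|) :
    ‖(C : Set ι).indicator g‖₂ ≤ (√k)⁻¹ * ∑ b ∈ B, |g b| := by
  set a := (∑ b ∈ B, |g b|) / k with ha
  have hk' : (0 : ℝ) < k := by exact_mod_cast hk
  have hca (c) (hc : c ∈ C) : |g c| ≤ a := by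
    rw [le_div_iff₀ hk']
    calc |g c| * k ≤ ∑ _b ∈ B, |g c| := by
          rw [sum_const, nsmul_eq_mul, mul_comm]; gcongr
      _ ≤ ∑ b ∈ B, |g b| := sum_le_sum (hCB c hc)
  refine le_of_sq_le_sq ?_ (by positivity)
  calc ‖(C : Set ι).indicator g‖₂ ^ 2 = ∑ c ∈ C, |g c| ^ 2 := by
        simp only [norm_indicator_sq, sq_abs]
    _ ≤ ∑ _c ∈ C, a ^ 2 := sum_le_sum fun c hc => pow_le_pow_left₀ (abs_nonneg _) (hca c hc) 2
    _ ≤ k * a ^ 2 := by rw [sum_const, nsmul_eq_mul]; gcongr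
    _ = ((√k)⁻¹ * ∑ b ∈ B, |g b|) ^ 2 := by
        rw [mul_pow, inv_pow, Real.sq_sqrt hk'.le, ha]; field_simp

lemma norm_add_sq_of_disjoint {u₀ u₁ : ι → ℝ} {T₀ T₁ : Finset ι} (hu₀ : support u₀ ⊆ T₀)
    (hu₁ : support u₁ ⊆ T₁) (hT : Disjoint T₀ T₁) :
    ‖u₀ + u₁‖₂ ^ 2 = ‖u₀‖₂ ^ 2 + ‖u₁‖₂ ^ 2 := by
  rw [toLp_add, norm_add_sq_real, inner_toLp_eq_zero hu₀ hu₁ hT]; ring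

lemma norm_add_le_sqrt_two_mul {u₀ u₁ : ι → ℝ} {T₀ T₁ : Finset ι} (hu₀ : support u₀ ⊆ T₀)
    (hu₁ : support u₁ ⊆ T₁) (hT : Disjoint T₀ T₁) :
    ‖u₀‖₂ + ‖u₁‖₂ ≤ √2 * ‖u₀ + u₁‖₂ := by
  refine le_of_sq_le_sq ?_ (by positivity)
  rw [mul_pow, Real.sq_sqrt zero_le_two, norm_add_sq_of_disjoint hu₀ hu₁ hT]
  nlinarith [sq_nonneg (‖u₀‖₂ - ‖u₁‖₂)]

section Blocks

variable (g : ι → ℝ) (A : Finset ι)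

-- sorting by this injective key lists the coordinates by decreasing `|g j|`
def sortKey (j : ι) : ℝ ×ₗ ℕ := toLex (-|g j|, (Fintype.equivFin ι j : ℕ))

lemma sortKey_injective : Injective (sortKey g) := fun a b h => by
  simpa [sortKey, Fin.val_inj] using congrArg (fun p => (ofLex p).2) h

def rank (j : ι) : ℕ := #{b ∈ A | sortKey g b < sortKey g j}

variable {g A}

lemma rank_lt_rank {a b : ι} (ha : a ∈ A) (h : sortKey g a < sortKey g b) :
    rank g A a < rank g A b := by
  refine card_lt_card ⟨fun c hc => ?_, fun hsub => ?_⟩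
  · simp only [mem_filter] at hc ⊢
    exact ⟨hc.1, hc.2.trans h⟩
  · simpa using hsub (mem_filter.2 ⟨ha, h⟩)

lemma abs_le_abs_of_rank_lt {a b : ι} (hb : b ∈ A) (h : rank g A a < rank g A b) :
    |g b| ≤ |g a| := by
  rcases lt_trichotomy (sortKey g a) (sortKey g b) with hab | hab | hab
  · have := (Prod.Lex.toLex_lt_toLex'.1 hab).1
    simp only at this
    linarith
  · exact absurd h (by rw [sortKey_injective g hab]; exact lt_irrefl _)
  · exact absurd (rank_lt_rank hb hab) h.not_gt

lemma rank_lt_card {a : ι} (ha : a ∈ A) : rank g A a < #A :=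
  card_lt_card ⟨filter_subset _ _, fun h => by simpa using h ha⟩

lemma injOn_rank : Set.InjOn (rank g A) A := fun a ha b hb h => by
  rcases lt_trichotomy (sortKey g a) (sortKey g b) with hab | hab | hab
  · exact absurd h (rank_lt_rank ha hab).ne
  · exact sortKey_injective g hab
  · exact absurd h (rank_lt_rank hb hab).ne'

lemma image_rank : A.image (rank g A) = range #A := by
  refine eq_of_subset_of_card_le (fun r hr => ?_) ?_
  · obtain ⟨a, ha, rfl⟩ := mem_image.1 hr
    exact mem_range.2 (rank_lt_card ha)
  · rw [card_range, card_image_of_injOn injOn_rank]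

variable (g A)

/-- The `i`-th block of `k` consecutive coordinates of `A` in the order of decreasing `|g|`. -/
def block (k i : ℕ) : Finset ι := {j ∈ A | rank g A j / k = i}

variable {g A}

lemma card_block_le {k : ℕ} (hk : 0 < k) (i : ℕ) : #(block g A k i) ≤ k := by
  calc #(block g A k i) ≤ #(Ico (i * k) (i * k + k)) := by
        refine card_le_card_of_injOn (rank g A) (fun j hj => ?_)
          (injOn_rank.mono (filter_subset _ _))
        obtain ⟨-, hj⟩ := mem_filter.1 hj
        rw [coe_Ico, Set.mem_Ico, ← hj]
        exact ⟨Nat.div_mul_le_self _ _, Nat.lt_div_mul_add hk⟩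
    _ = k := by simp

lemma le_card_block {k i : ℕ} (hne : (block g A k (i + 1)).Nonempty) :
    k ≤ #(block g A k i) := by
  obtain ⟨a, ha⟩ := hne
  obtain ⟨haA, hai⟩ := mem_filter.1 ha
  have hlt : (i + 1) * k ≤ #A :=
    (hai ▸ Nat.div_mul_le_self _ _).trans (rank_lt_card haA).le
  calc k = #(Ico (i * k) (i * k + k)) := by simp
    _ ≤ #((block g A k i).image (rank g A)) := by
        refine card_le_card fun r hr => ?_
        obtain ⟨hr₁, hr₂⟩ := mem_Ico.1 hr
        obtain ⟨b, hb, rfl⟩ := mem_image.1 (image_rank (g := g) (A := A) ▸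
          mem_range.2 (show r < #A by linarith))
        exact mem_image_of_mem _ (mem_filter.2 ⟨hb, Nat.div_eq_of_lt_le hr₁ (by linarith)⟩)
    _ ≤ #(block g A k i) := card_image_le

lemma abs_le_abs_of_mem_block {k i : ℕ} {a b : ι} (ha : a ∈ block g A k (i + 1))
    (hb : b ∈ block g A k i) : |g a| ≤ |g b| := by
  obtain ⟨haA, hai⟩ := mem_filter.1 ha
  obtain ⟨-, hbi⟩ := mem_filter.1 hb
  exact abs_le_abs_of_rank_lt haA (Nat.lt_of_div_lt_div (c := k) (by omega))

lemma indicator_eq_sum_indicator_block (k : ℕ) :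
    (A : Set ι).indicator g = ∑ i ∈ range (#A + 1), (block g A k i : Set ι).indicator g := by
  classical
  funext j
  rw [Finset.sum_apply]
  by_cases hj : j ∈ A
  · have hlt : rank g A j / k < #A + 1 := (Nat.div_le_self _ _).trans_lt (by
      have := rank_lt_card (g := g) hj; omega)
    simp only [Set.indicator_apply, block, coe_filter, Set.mem_ofPred_eq, mem_coe, hj, true_and,
      if_true]
    rw [sum_ite_eq, if_pos (mem_range.2 hlt)]
  · simp [block, hj]

lemma sum_norm_indicator_block_succ_le {k : ℕ} (hk : 0 < k) :
    ∑ i ∈ range #A, ‖(block g A k (i + 1) : Set ι).indicator g‖₂ ≤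
      (√k)⁻¹ * ∑ j ∈ A, |g j| := by
  classical
  calc ∑ i ∈ range #A, ‖(block g A k (i + 1) : Set ι).indicator g‖₂
      ≤ ∑ i ∈ range #A, (√k)⁻¹ * ∑ j ∈ block g A k i, |g j| := by
        refine sum_le_sum fun i _ => ?_
        rcases (block g A k (i + 1)).eq_empty_or_nonempty with he | hne
        · rw [he, coe_empty, Set.indicator_empty, ← Pi.zero_def, toLp_zero, norm_zero]
          positivity
        · exact norm_indicator_le_of_abs_le hk (card_block_le hk _) (le_card_block hne)
            fun _ ha _ hb => abs_le_abs_of_mem_block ha hb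
    _ = (√k)⁻¹ * ∑ j ∈ A, |g j| := by
        rw [← mul_sum]
        congr 1
        exact sum_fiberwise_of_maps_to (fun j hj => mem_range.2 ((Nat.div_le_self _ _).trans_lt
          (rank_lt_card hj))) _

variable (g A)

lemma exists_block_decomposition [DecidableEq ι] {k : ℕ} (hk : 0 < k) :
    ∃ T₁ ⊆ A, #T₁ ≤ k ∧ ∃ B : ℕ → Finset ι, (∀ i, B i ⊆ A \ T₁ ∧ #(B i) ≤ k) ∧
      (A : Set ι).indicator g =
        (T₁ : Set ι).indicator g + ∑ i ∈ range #A, (B i : Set ι).indicator g ∧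
      ∑ i ∈ range #A, ‖(B i : Set ι).indicator g‖₂ ≤ (√k)⁻¹ * ∑ j ∈ A, |g j| := by
  refine ⟨block g A k 0, filter_subset _ _, card_block_le hk 0, fun i => block g A k (i + 1),
    fun i => ⟨fun j hj => ?_, card_block_le hk _⟩, ?_, sum_norm_indicator_block_succ_le hk⟩
  · obtain ⟨hjA, hji⟩ := mem_filter.1 hj
    exact mem_sdiff.2 ⟨hjA, fun h => Nat.succ_ne_zero i (hji.symm.trans (mem_filter.1 h).2)⟩
  · rw [indicator_eq_sum_indicator_block k, sum_range_succ', add_comm]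

end Blocks

lemma sum_compl_abs_sub_le [DecidableEq ι] (T : Finset ι) {x z : ι → ℝ}
    (hz : ∑ j, |z j| ≤ ∑ j, |x j|) :
    ∑ j ∈ Tᶜ, |z j - x j| ≤ ∑ j ∈ T, |z j - x j| + 2 * ∑ j ∈ Tᶜ, |x j| := by
  rw [← sum_add_sum_compl T, ← sum_add_sum_compl T (fun j => |x j|)] at hz
  have hT : ∑ j ∈ T, (|x j| - |z j - x j|) ≤ ∑ j ∈ T, |z j| :=
    sum_le_sum fun j _ => by
      linarith [abs_sub_abs_le_abs_sub (x j) (z j), abs_sub_comm (x j) (z j)]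
  have hTc : ∑ j ∈ Tᶜ, (|z j - x j| - |x j|) ≤ ∑ j ∈ Tᶜ, |z j| :=
    sum_le_sum fun j _ => by linarith [abs_sub (z j) (x j)]
  rw [sum_sub_distrib] at hT hTc
  linarith

def nspConstant (δ : ℝ) : ℝ := √2 * δ / (1 - δ)

lemma nspConstant_nonneg {δ : ℝ} (hδ₀ : 0 ≤ δ) (hδ₁ : δ < 1) : 0 ≤ nspConstant δ :=
  div_nonneg (by positivity) (by linarith)

lemma sqrt_two_sub_one_lt_one : √2 - 1 < 1 := by
  nlinarith [Real.sq_sqrt zero_le_two, Real.sqrt_nonneg 2]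

lemma nspConstant_lt_one {δ : ℝ} (hδ₀ : 0 ≤ δ) (hδ₁ : δ < √2 - 1) : nspConstant δ < 1 := by
  rw [nspConstant, div_lt_one (by linarith [sqrt_two_sub_one_lt_one])]
  nlinarith [Real.mul_self_sqrt zero_le_two, Real.sqrt_nonneg 2]

def recoveryConstant (δ : ℝ) : ℝ := 2 * (1 + nspConstant δ) / (1 - nspConstant δ)

def IsRIP (Φ : Matrix m ι ℝ) (s : ℕ) (δ : ℝ) : Prop :=
  ∀ w : ι → ℝ, #{j | w j ≠ 0} ≤ s →
    (1 - δ) * ‖w‖₂ ^ 2 ≤ ‖Φ *ᵥ w‖₂ ^ 2 ∧ ‖Φ *ᵥ w‖₂ ^ 2 ≤ (1 + δ) * ‖w‖₂ ^ 2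

namespace IsRIP

variable {Φ : Matrix m ι ℝ} {s k : ℕ} {δ : ℝ}

lemma abs_inner_le_of_norm_eq_one (hΦ : IsRIP Φ s δ) {u v : ι → ℝ} {U V : Finset ι}
    (hu : support u ⊆ U) (hv : support v ⊆ V) (hUV : Disjoint U V) (hs : #U + #V ≤ s)
    (hu1 : ‖u‖₂ = 1) (hv1 : ‖v‖₂ = 1) :
    |inner ℝ (toLp 2 (Φ *ᵥ u)) (toLp 2 (Φ *ᵥ v))| ≤ δ := by
  classical
  have horth := inner_toLp_eq_zero hu hv hUV
  have hsupp (c : ℝ) : #{j | (u + c • v) j ≠ 0} ≤ s := by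
    refine (card_filter_ne_zero_le (U := U ∪ V) ?_).trans ((card_union_le _ _).trans hs)
    rw [coe_union]
    exact (support_add _ _).trans
      (Set.union_subset_union hu ((support_smul_subset_right _ _).trans hv))
  have hplus := hΦ _ (hsupp 1)
  have hminus := hΦ _ (hsupp (-1))
  simp only [one_smul, neg_one_smul, ← sub_eq_add_neg, Matrix.mulVec_add, Matrix.mulVec_sub,
    toLp_add, toLp_sub, norm_add_sq_real, norm_sub_sq_real, horth, hu1, hv1] at hplus hminus
  rw [abs_le]
  constructor <;> nlinarith [hplus, hminus]

lemma abs_inner_le (hΦ : IsRIP Φ s δ) {u v : ι → ℝ} {U V : Finset ι}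
    (hu : support u ⊆ U) (hv : support v ⊆ V) (hUV : Disjoint U V) (hs : #U + #V ≤ s) :
    |inner ℝ (toLp 2 (Φ *ᵥ u)) (toLp 2 (Φ *ᵥ v))| ≤ δ * ‖u‖₂ * ‖v‖₂ := by
  rcases eq_or_ne (toLp 2 u) 0 with hu0 | hu0
  · simp [show u = 0 from by simpa using hu0]
  rcases eq_or_ne (toLp 2 v) 0 with hv0 | hv0
  · simp [show v = 0 from by simpa using hv0]
  have key := hΦ.abs_inner_le_of_norm_eq_one (u := ‖u‖₂⁻¹ • u) (v := ‖v‖₂⁻¹ • v)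
    ((support_smul_subset_right _ _).trans hu) ((support_smul_subset_right _ _).trans hv) hUV hs
    (by rw [toLp_smul]; exact norm_smul_inv_norm hu0)
    (by rw [toLp_smul]; exact norm_smul_inv_norm hv0)
  rw [Matrix.mulVec_smul, Matrix.mulVec_smul, toLp_smul, toLp_smul, real_inner_smul_left,
    real_inner_smul_right, abs_mul, abs_mul, abs_inv, abs_inv, abs_norm, abs_norm] at key
  rwa [← le_div_iff₀' (by positivity), ← le_div_iff₀' (by positivity), div_inv_eq_mul,
    div_inv_eq_mul] at key

lemma norm_le_of_mulVec_eq_zero (hΦ : IsRIP Φ (2 * k) δ) (hδ : 0 ≤ δ)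
    {T₀ T₁ : Finset ι} {u₀ u₁ : ι → ℝ} (hu₀ : support u₀ ⊆ T₀) (hu₁ : support u₁ ⊆ T₁)
    (hT : Disjoint T₀ T₁) (hT₀ : #T₀ ≤ k) (hT₁ : #T₁ ≤ k)
    {α : Type*} {S : Finset α} {B : α → Finset ι} {v : α → ι → ℝ}
    (hv : ∀ i ∈ S, support (v i) ⊆ B i)
    (hB : ∀ i ∈ S, #(B i) ≤ k ∧ Disjoint T₀ (B i) ∧ Disjoint T₁ (B i))
    (hker : Φ *ᵥ (u₀ + u₁ + ∑ i ∈ S, v i) = 0) :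
    (1 - δ) * ‖u₀ + u₁‖₂ ≤ √2 * δ * ∑ i ∈ S, ‖v i‖₂ := by
  classical
  have hlower : (1 - δ) * ‖u₀ + u₁‖₂ ^ 2 ≤ ‖Φ *ᵥ (u₀ + u₁)‖₂ ^ 2 := by
    refine (hΦ _ ((card_filter_ne_zero_le (U := T₀ ∪ T₁) ?_).trans ?_)).1
    · rw [coe_union]; exact (support_add _ _).trans (Set.union_subset_union hu₀ hu₁)
    · rw [two_mul]; exact (card_union_le _ _).trans (add_le_add hT₀ hT₁)
  have hΦu : toLp 2 (Φ *ᵥ (u₀ + u₁)) = -∑ i ∈ S, toLp 2 (Φ *ᵥ v i) := by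
    rw [Matrix.mulVec_add _ (u₀ + u₁), Matrix.mulVec_sum] at hker
    rw [← toLp_sum, ← toLp_neg, eq_neg_of_add_eq_zero_left hker]
  have hinner (i) (hi : i ∈ S) : |inner ℝ (toLp 2 (Φ *ᵥ (u₀ + u₁))) (toLp 2 (Φ *ᵥ v i))| ≤
      δ * (‖u₀‖₂ + ‖u₁‖₂) * ‖v i‖₂ := by
    obtain ⟨hBk, hB₀, hB₁⟩ := hB i hi
    rw [Matrix.mulVec_add, toLp_add, inner_add_left]
    refine (abs_add_le _ _).trans ?_
    have h₀ := hΦ.abs_inner_le hu₀ (hv i hi) hB₀ (by omega)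
    have h₁ := hΦ.abs_inner_le hu₁ (hv i hi) hB₁ (by omega)
    linarith
  have hupper : ‖Φ *ᵥ (u₀ + u₁)‖₂ ^ 2 ≤ (√2 * δ * ∑ i ∈ S, ‖v i‖₂) * ‖u₀ + u₁‖₂ :=
    calc ‖Φ *ᵥ (u₀ + u₁)‖₂ ^ 2
        = -∑ i ∈ S, inner ℝ (toLp 2 (Φ *ᵥ (u₀ + u₁))) (toLp 2 (Φ *ᵥ v i)) := by
          rw [← real_inner_self_eq_norm_sq]
          nth_rw 2 [hΦu]
          rw [inner_neg_right, inner_sum]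
      _ ≤ ∑ i ∈ S, δ * (‖u₀‖₂ + ‖u₁‖₂) * ‖v i‖₂ :=
          (neg_le_abs _).trans ((abs_sum_le_sum_abs _ _).trans (sum_le_sum hinner))
      _ = δ * (‖u₀‖₂ + ‖u₁‖₂) * ∑ i ∈ S, ‖v i‖₂ := by rw [mul_sum]
      _ ≤ δ * (√2 * ‖u₀ + u₁‖₂) * ∑ i ∈ S, ‖v i‖₂ := by
          gcongr; exact norm_add_le_sqrt_two_mul hu₀ hu₁ hT
      _ = (√2 * δ * ∑ i ∈ S, ‖v i‖₂) * ‖u₀ + u₁‖₂ := by ring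
  rcases (norm_nonneg (toLp 2 (u₀ + u₁))).eq_or_lt with hu0 | hu_pos
  · rw [← hu0, mul_zero]
    exact mul_nonneg (mul_nonneg (Real.sqrt_nonneg 2) hδ) (sum_nonneg fun _ _ => norm_nonneg _)
  · exact le_of_mul_le_mul_right (by linarith) hu_pos

theorem sum_abs_le_and_norm_le_of_mulVec_eq_zero [DecidableEq ι] (hk : 0 < k)
    (hΦ : IsRIP Φ (2 * k) δ) (hδ₀ : 0 ≤ δ) (hδ₁ : δ < 1) {h : ι → ℝ} (hh : Φ *ᵥ h = 0)
    {T : Finset ι} (hT : #T ≤ k) :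
    ∑ j ∈ T, |h j| ≤ nspConstant δ * ∑ j ∈ Tᶜ, |h j| ∧
      ‖h‖₂ ≤ (1 + nspConstant δ) * (√k)⁻¹ * ∑ j ∈ Tᶜ, |h j| := by
  obtain ⟨T₁, hT₁, hT₁k, B, hB, hdecomp, htail⟩ := exists_block_decomposition h Tᶜ hk
  set b := ∑ j ∈ Tᶜ, |h j|
  set u₀ := (T : Set ι).indicator h
  set u₁ := (T₁ : Set ι).indicator h
  have hsplit : h = u₀ + u₁ + ∑ i ∈ range #Tᶜ, (B i : Set ι).indicator h := by
    rw [add_assoc, ← hdecomp, coe_compl, Set.indicator_self_add_compl]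
  have hTT₁ : Disjoint T T₁ := disjoint_of_subset_right hT₁ disjoint_compl_right
  have hk' : (0 : ℝ) < √k := Real.sqrt_pos.2 (by exact_mod_cast hk)
  have hhead : ‖u₀ + u₁‖₂ ≤ nspConstant δ * ((√k)⁻¹ * b) := by
    rw [nspConstant, div_mul_eq_mul_div, le_div_iff₀ (by linarith), mul_comm]
    refine (hΦ.norm_le_of_mulVec_eq_zero hδ₀ (Set.support_indicator_subset)
      (Set.support_indicator_subset) hTT₁ hT hT₁k (fun i _ => Set.support_indicator_subset)
      (fun i _ => ⟨(hB i).2, ?_, ?_⟩) (hsplit ▸ hh)).trans ?_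
    · exact disjoint_of_subset_right ((hB i).1.trans sdiff_subset) disjoint_compl_right
    · exact disjoint_of_subset_right (hB i).1 disjoint_sdiff
    · gcongr
  have hu₀ : ‖u₀‖₂ ≤ ‖u₀ + u₁‖₂ := by
    refine le_of_sq_le_sq ?_ (norm_nonneg _)
    rw [norm_add_sq_of_disjoint Set.support_indicator_subset Set.support_indicator_subset hTT₁]
    nlinarith [sq_nonneg ‖u₁‖₂]
  constructor
  · calc ∑ j ∈ T, |h j| ≤ √k * ‖u₀ + u₁‖₂ :=
          (sum_abs_le_sqrt_card_mul_norm T h).trans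
            (mul_le_mul (Real.sqrt_le_sqrt (by exact_mod_cast hT)) hu₀ (norm_nonneg _) hk'.le)
      _ ≤ √k * (nspConstant δ * ((√k)⁻¹ * b)) := by gcongr
      _ = nspConstant δ * b := by field_simp
  · calc ‖h‖₂ ≤ ‖u₀ + u₁‖₂ + ∑ i ∈ range #Tᶜ, ‖(B i : Set ι).indicator h‖₂ := by
          conv_lhs => rw [hsplit]
          rw [toLp_add, toLp_sum]
          exact (norm_add_le _ _).trans (add_le_add le_rfl (norm_sum_le _ _))
      _ ≤ nspConstant δ * ((√k)⁻¹ * b) + (√k)⁻¹ * b := add_le_add hhead htail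
      _ = (1 + nspConstant δ) * (√k)⁻¹ * b := by ring

theorem error_bounds_of_sum_abs_le [DecidableEq ι] (hk : 0 < k) (hΦ : IsRIP Φ (2 * k) δ)
    (hδ₀ : 0 ≤ δ) (hδ₁ : δ < √2 - 1) {x xstar : ι → ℝ} (hfeas : Φ *ᵥ xstar = Φ *ᵥ x)
    (hmin : ∑ j, |xstar j| ≤ ∑ j, |x j|) {T : Finset ι} (hT : #T ≤ k) :
    ∑ j, |xstar j - x j| ≤ recoveryConstant δ * ∑ j ∈ Tᶜ, |x j| ∧
      ‖xstar - x‖₂ ≤ recoveryConstant δ * (√k)⁻¹ * ∑ j ∈ Tᶜ, |x j| := by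
  have hδ : δ < 1 := hδ₁.trans sqrt_two_sub_one_lt_one
  have hρ₀ := nspConstant_nonneg hδ₀ hδ
  have hρ₁ := nspConstant_lt_one hδ₀ hδ₁
  obtain ⟨hhead, hnorm⟩ := hΦ.sum_abs_le_and_norm_le_of_mulVec_eq_zero hk hδ₀ hδ
    (h := xstar - x) (by rw [mulVec_sub, hfeas, sub_self]) hT
  simp only [Pi.sub_apply] at hhead hnorm
  have hcone := sum_compl_abs_sub_le T hmin
  set ρ := nspConstant δ
  set e := ∑ j ∈ Tᶜ, |x j|
  have htail : ∑ j ∈ Tᶜ, |xstar j - x j| ≤ 2 / (1 - ρ) * e := by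
    rw [div_mul_eq_mul_div, le_div_iff₀ (by linarith)]
    linarith
  have hC : recoveryConstant δ = (1 + ρ) * (2 / (1 - ρ)) := by
    rw [recoveryConstant, mul_div_assoc']; ring
  constructor
  · calc ∑ j, |xstar j - x j| ≤ (1 + ρ) * ∑ j ∈ Tᶜ, |xstar j - x j| := by
          rw [← sum_add_sum_compl T]; linarith
      _ ≤ recoveryConstant δ * e := by rw [hC, mul_assoc]; gcongr
  · calc ‖xstar - x‖₂ ≤ (1 + ρ) * (√k)⁻¹ * ∑ j ∈ Tᶜ, |xstar j - x j| := hnorm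
      _ ≤ recoveryConstant δ * (√k)⁻¹ * e := by
          rw [hC, mul_right_comm _ _ (√k)⁻¹, mul_assoc _ (2 / (1 - ρ))]; gcongr

end IsRIP

end SparseRecovery

open SparseRecovery

theorem stmt13 (δ : ℝ) (hδ0 : 0 < δ) (hδ1 : δ < Real.sqrt 2 - 1) :
    ∃ C₀ : ℝ, ∀ (n N k : ℕ), 1 ≤ k →
      ∀ Φ : Matrix (Fin n) (Fin N) ℝ,
      (∀ w : Fin N → ℝ, (Finset.univ.filter (fun j => w j ≠ 0)).card ≤ 2 * k →
        (1 - δ) * ∑ j, (w j) ^ 2 ≤ ∑ i, (Φ.mulVec w i) ^ 2 ∧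
        ∑ i, (Φ.mulVec w i) ^ 2 ≤ (1 + δ) * ∑ j, (w j) ^ 2) →
      ∀ x : Fin N → ℝ,
      -- `T` is a set of `k` coordinates of largest absolute value, so that
      -- `x_{(k)} = fun j => if j ∈ T then x j else 0`
      ∀ T : Finset (Fin N), T.card = min k N →
        (∀ i ∈ T, ∀ j ∉ T, |x j| ≤ |x i|) →
      ∀ xstar : Fin N → ℝ,
        Φ.mulVec xstar = Φ.mulVec x →
        (∀ z : Fin N → ℝ, Φ.mulVec z = Φ.mulVec x → ∑ j, |xstar j| ≤ ∑ j, |z j|) →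
        (∑ j, |xstar j - x j|
            ≤ C₀ * ∑ j, |x j - (if j ∈ T then x j else 0)|) ∧
        Real.sqrt (∑ j, (xstar j - x j) ^ 2)
            ≤ C₀ * (Real.sqrt k)⁻¹ * ∑ j, |x j - (if j ∈ T then x j else 0)| := by
  refine ⟨recoveryConstant δ, fun n N k hk Φ hRIP x T hT _ xstar hfeas hmin => ?_⟩
  have hΦ : IsRIP Φ (2 * k) δ := fun w hw => by simpa only [norm_toLp_sq] using hRIP w hw
  have htail : ∑ j, |x j - (if j ∈ T then x j else 0)| = ∑ j ∈ Tᶜ, |x j| := by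
    rw [← sum_add_sum_compl T, sum_eq_zero fun j hj => by simp [hj], zero_add]
    exact sum_congr rfl fun j hj => by simp [mem_compl.1 hj]
  have hnorm : √(∑ j, (xstar j - x j) ^ 2) = ‖xstar - x‖₂ := (norm_toLp_eq_sqrt _).symm
  rw [htail, hnorm]
  exact hΦ.error_bounds_of_sum_abs_le hk hδ0.le hδ1 hfeas (hmin x rfl) (hT ▸ min_le_left _ _)
end
end

section
/- Let Φ be an n × N real matrix, k ≥ 1, and suppose there exists δ with 0 < δ < √2 − 1 such that (1−δ)·‖w‖₂² ≤ ‖Φw‖₂² ≤ (1+δ)·‖w‖₂² for every 2k-sparse vector w ∈ ℝ^N. Then there exist constants C₀ and C₁, depending only on δ, such that for every x ∈ ℝ^N, every ε ≥ 0, and every noise vector z ∈ ℝ^n with ‖z‖₂ ≤ ε, setting y = Φx + z, any vector x* satisfying ‖y − Φx*‖₂ ≤ ε and ‖x*‖₁ ≤ ‖w‖₁ for all w with ‖y − Φw‖₂ ≤ ε obeys ‖x* − x‖₂ ≤ C₀·k^{−1/2}·‖x − x_{(k)}‖₁ + C₁·ε, where x_{(k)} is obtained from x by setting all but the k largest-magnitude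 entries to zero. -/
/-!
Candès' argument. Put `h = x* - x`. Minimality of `‖x*‖₁` gives the cone constraint
`‖h_{Tᶜ}‖₁ ≤ ‖h_T‖₁ + 2 ‖x_{Tᶜ}‖₁`, and feasibility of both `x` and `x*` the tube constraint
`‖Φ h‖₂ ≤ 2ε`. Cutting `Tᶜ` into blocks `T₁, T₂, …` of `k` coordinates of decreasing `|h|` gives
`∑_{j ≥ 2} ‖h_{T_j}‖₂ ≤ k^{-1/2} ‖h_{Tᶜ}‖₁ ≤ ‖h_T‖₂ + 2 k^{-1/2} ‖x_{Tᶜ}‖₁`.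
The RIP makes `Φ` nearly isometric on `h_{T ∪ T₁}` and, by polarization, makes `Φ h_T` and
`Φ h_{T₁}` nearly orthogonal to every `Φ h_{T_j}`. Expanding
`‖Φ h_{T ∪ T₁}‖² = ⟪Φ h_{T ∪ T₁}, Φ h⟫ - ∑_{j ≥ 2} ⟪Φ h_{T ∪ T₁}, Φ h_{T_j}⟫`
then bounds `‖h_{T ∪ T₁}‖₂`, and with it `‖h‖₂`, as soon as `(√2 + 1) δ < 1`.
-/

open Finset Function RealInnerProductSpace

noncomputable section

def candesC₀ (δ : ℝ) : ℝ := 2 * (1 + (√2 - 1) * δ) / (1 - (√2 + 1) * δ)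

def candesC₁ (δ : ℝ) : ℝ := 4 * √(1 + δ) / (1 - (√2 + 1) * δ)

section NearIsometry

variable {E F ι : Type*} [NormedAddCommGroup E] [InnerProductSpace ℝ E]
  [NormedAddCommGroup F] [InnerProductSpace ℝ F]

lemma norm_smul_add_smul_sq (a b : ℝ) (x y : E) :
    ‖a • x + b • y‖ ^ 2 = a ^ 2 * ‖x‖ ^ 2 + 2 * a * b * ⟪x, y⟫ + b ^ 2 * ‖y‖ ^ 2 := by
  rw [norm_add_sq_real, norm_smul, norm_smul, real_inner_smul_left, real_inner_smul_right,
    mul_pow, mul_pow, Real.norm_eq_abs, Real.norm_eq_abs, sq_abs, sq_abs]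
  ring

lemma abs_inner_map_le_of_near_isometry (A : E →ₗ[ℝ] F) {δ : ℝ} {u v : E}
    (huv : ⟪u, v⟫ = 0)
    (hA : ∀ a b : ℝ, (1 - δ) * ‖a • u + b • v‖ ^ 2 ≤ ‖A (a • u + b • v)‖ ^ 2 ∧
      ‖A (a • u + b • v)‖ ^ 2 ≤ (1 + δ) * ‖a • u + b • v‖ ^ 2) :
    |⟪A u, A v⟫| ≤ δ * ‖u‖ * ‖v‖ := by
  rcases (mul_nonneg (norm_nonneg u) (norm_nonneg v)).eq_or_lt with huv0 | huv0
  · rcases mul_eq_zero.mp huv0.symm with hu | hv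
    · simp [norm_eq_zero.mp hu]
    · simp [norm_eq_zero.mp hv]
  -- Polarization: `‖v‖ • u ± ‖u‖ • v` both have squared norm `2 ‖u‖² ‖v‖²`.
  have hplus := hA ‖v‖ ‖u‖
  have hminus := hA ‖v‖ (-‖u‖)
  simp only [map_add, map_smul, norm_smul_add_smul_sq, huv] at hplus hminus
  refine abs_le.mpr ⟨?_, ?_⟩ <;>
  · refine le_of_mul_le_mul_left ?_ (mul_pos (by norm_num : (0 : ℝ) < 4) huv0)
    nlinarith

lemma norm_add_le_sqrt_two_mul_of_inner_eq_zero {u v : E} (huv : ⟪u, v⟫ = 0) :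
    ‖u‖ + ‖v‖ ≤ √2 * ‖u + v‖ := by
  have hsq : ‖u + v‖ ^ 2 = ‖u‖ ^ 2 + ‖v‖ ^ 2 := by rw [norm_add_sq_real, huv]; ring
  rw [← Real.sqrt_sq (norm_nonneg (u + v)), ← Real.sqrt_mul zero_le_two, hsq]
  apply Real.le_sqrt_of_sq_le
  nlinarith [sq_nonneg (‖u‖ - ‖v‖)]

lemma neg_inner_map_add_le (A : E →ₗ[ℝ] F) {δ : ℝ} (hδ : 0 ≤ δ) {u v g : E} (huv : ⟪u, v⟫ = 0)
    (hug : |⟪A u, A g⟫| ≤ δ * ‖u‖ * ‖g‖) (hvg : |⟪A v, A g⟫| ≤ δ * ‖v‖ * ‖g‖) :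
    -⟪A (u + v), A g⟫ ≤ √2 * δ * ‖u + v‖ * ‖g‖ := by
  have huv' := norm_add_le_sqrt_two_mul_of_inner_eq_zero huv
  have hδg := mul_nonneg hδ (norm_nonneg g)
  rw [map_add, inner_add_left]
  nlinarith [neg_abs_le ⟪A u, A g⟫, neg_abs_le ⟪A v, A g⟫]

theorem norm_le_of_near_isometry_of_cone (A : E →ₗ[ℝ] F) {δ ε σ : ℝ} (hδ : 0 ≤ δ)
    (hρ : 0 < 1 - (√2 + 1) * δ) {u v : E} {s : Finset ι} {g : ι → E} (huv : ⟪u, v⟫ = 0)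
    (hlow : (1 - δ) * ‖u + v‖ ^ 2 ≤ ‖A (u + v)‖ ^ 2)
    (hup : ‖A (u + v)‖ ^ 2 ≤ (1 + δ) * ‖u + v‖ ^ 2)
    (hug : ∀ j ∈ s, |⟪A u, A (g j)⟫| ≤ δ * ‖u‖ * ‖g j‖)
    (hvg : ∀ j ∈ s, |⟪A v, A (g j)⟫| ≤ δ * ‖v‖ * ‖g j‖)
    (htube : ‖A (u + v + ∑ j ∈ s, g j)‖ ≤ 2 * ε)
    (hcone : ∑ j ∈ s, ‖g j‖ ≤ ‖u‖ + 2 * σ) :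
    ‖u + v + ∑ j ∈ s, g j‖ ≤ candesC₀ δ * σ + candesC₁ δ * ε := by
  have hu : ‖u‖ ≤ ‖u + v‖ := by
    rw [← sq_le_sq₀ (norm_nonneg _) (norm_nonneg _), norm_add_sq_real, huv]
    nlinarith [sq_nonneg ‖v‖]
  set w := u + v
  set G := ∑ j ∈ s, g j
  have hG : ∑ j ∈ s, ‖g j‖ ≤ ‖w‖ + 2 * σ := by linarith
  have hG₀ : 0 ≤ ∑ j ∈ s, ‖g j‖ := sum_nonneg fun j _ => norm_nonneg (g j)
  have hAw : ‖A w‖ ≤ √(1 + δ) * ‖w‖ := by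
    rw [← Real.sqrt_sq (norm_nonneg (A w)), ← Real.sqrt_sq (norm_nonneg w),
      ← Real.sqrt_mul (by linarith)]
    exact Real.sqrt_le_sqrt hup
  have hsplit : ⟪A w, A (w + G)⟫ = ‖A w‖ ^ 2 + ∑ j ∈ s, ⟪A w, A (g j)⟫ := by
    rw [map_add A w G, inner_add_right, real_inner_self_eq_norm_sq, map_sum, inner_sum]
  have hcross : -∑ j ∈ s, ⟪A w, A (g j)⟫ ≤ √2 * δ * ‖w‖ * (‖w‖ + 2 * σ) :=
    calc -∑ j ∈ s, ⟪A w, A (g j)⟫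
        ≤ ∑ j ∈ s, √2 * δ * ‖w‖ * ‖g j‖ := by
          rw [← sum_neg_distrib]
          exact sum_le_sum fun j hj => neg_inner_map_add_le A hδ huv (hug j hj) (hvg j hj)
      _ ≤ √2 * δ * ‖w‖ * (‖w‖ + 2 * σ) := by
          rw [← mul_sum]
          gcongr
  have hwsq : (1 - δ) * ‖w‖ ^ 2 ≤ ‖w‖ * (2 * √(1 + δ) * ε + √2 * δ * (‖w‖ + 2 * σ)) := by
    have := (real_inner_le_norm (A w) (A (w + G))).trans
      (mul_le_mul hAw htube (norm_nonneg _) (by positivity))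
    nlinarith
  have hw : (1 - (√2 + 1) * δ) * ‖w‖ ≤ 2 * √(1 + δ) * ε + 2 * √2 * δ * σ := by
    rcases (norm_nonneg w).eq_or_lt with hw0 | hwpos
    · have hε : 0 ≤ ε := by linarith [norm_nonneg (A (w + G))]
      have hσ : 0 ≤ σ := by linarith
      rw [← hw0, mul_zero]
      positivity
    · refine le_of_mul_le_mul_left ?_ hwpos
      nlinarith
  have hnorm : ‖w + G‖ ≤ 2 * ‖w‖ + 2 * σ :=
    calc ‖w + G‖ ≤ ‖w‖ + ∑ j ∈ s, ‖g j‖ :=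
          (norm_add_le _ _).trans (by gcongr; exact norm_sum_le _ _)
      _ ≤ 2 * ‖w‖ + 2 * σ := by linarith
  rw [candesC₀, candesC₁, div_mul_eq_mul_div, div_mul_eq_mul_div, ← add_div, le_div_iff₀ hρ]
  nlinarith

end NearIsometry

section SortedBlocks

variable {ι : Type*}

lemma sqrt_sum_sq_le_of_mul_abs_le_sum {U V : Finset ι} {x : ι → ℝ} {k : ℕ} (hk : 0 < k)
    (hU : #U ≤ k) (hUV : ∀ a ∈ U, k * |x a| ≤ ∑ b ∈ V, |x b|) :
    √(∑ a ∈ U, x a ^ 2) ≤ (√k)⁻¹ * ∑ b ∈ V, |x b| := by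
  have hk' : (0 : ℝ) < k := by exact_mod_cast hk
  set M := (∑ b ∈ V, |x b|) / k
  have hM : ∀ a ∈ U, x a ^ 2 ≤ M ^ 2 := fun a ha => by
    rw [← sq_abs]
    exact pow_le_pow_left₀ (abs_nonneg _) ((le_div_iff₀' hk').mpr (hUV a ha)) 2
  rw [Real.sqrt_le_left (by positivity)]
  calc ∑ a ∈ U, x a ^ 2 ≤ #U * M ^ 2 := by
        simpa using sum_le_sum hM
    _ ≤ k * M ^ 2 := by gcongr
    _ = ((√k)⁻¹ * ∑ b ∈ V, |x b|) ^ 2 := by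
        rw [mul_pow, inv_pow, Real.sq_sqrt hk'.le, div_pow]
        field_simp

lemma card_filter_div_eq_le [Fintype ι] {f : ι → ℕ} (hf : Injective f) {k : ℕ} (hk : 0 < k)
    (j : ℕ) : #{i | f i / k = j} ≤ k :=
  calc #{i | f i / k = j} ≤ #(Ico (j * k) (j * k + k)) := by
        refine card_le_card_of_injOn f (fun i hi => ?_) hf.injOn
        simp only [coe_filter, mem_univ, true_and, Set.mem_ofPred_eq] at hi
        have := (Nat.div_lt_iff_lt_mul hk).mp (hi.trans_lt j.lt_add_one)
        simp only [coe_Ico, Set.mem_Ico]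
        exact ⟨hi ▸ Nat.div_mul_le_self _ _, by linarith⟩
    _ = k := by simp

lemma exists_sorted_blocks [Fintype ι] (x : ι → ℝ) {k : ℕ} (hk : 0 < k) :
    ∃ c : ι → ℕ, (∀ i, c i < Fintype.card ι) ∧ (∀ j, #{i | c i = j} ≤ k) ∧
      ∀ j, √(∑ i with c i = j + 1, x i ^ 2) ≤ (√k)⁻¹ * ∑ i with c i = j, |x i| := by
  -- List the coordinates by decreasing `|x i|` and cut the list into blocks of `k`: an entry of
  -- block `j + 1` is at most every entry of block `j`, which is then full, so at most its average.
  set e := Fintype.equivFin ι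
  set f : Fin (Fintype.card ι) → ℝ := fun p => -|x (e.symm p)|
  set enum := (Tuple.sort f).trans e.symm
  have hanti : ∀ p q, p ≤ q → |x (enum q)| ≤ |x (enum p)| := fun p q hpq =>
    neg_le_neg_iff.mp (Tuple.monotone_sort f hpq)
  set pos : ι → ℕ := fun i => enum.symm i
  have hcard := card_filter_div_eq_le (f := pos) (fun i i' h => enum.symm.injective (Fin.ext h)) hk
  refine ⟨fun i => pos i / k, fun i => (Nat.div_le_self _ _).trans_lt (enum.symm i).2, hcard,
    fun j => sqrt_sum_sq_le_of_mul_abs_le_sum hk (hcard _) fun a ha => ?_⟩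
  simp only [mem_filter, mem_univ, true_and] at ha
  have hlt : ∀ b, pos b / k = j → pos b < pos a := fun b hb =>
    Nat.lt_of_div_lt_div (c := k) (by omega)
  have hfull : k ≤ #{i | pos i / k = j} := by
    have hend : (j + 1) * k ≤ pos a := ha ▸ Nat.div_mul_le_self _ _
    calc k = #(Ico (j * k) (j * k + k)) := by simp
      _ ≤ #(({i | pos i / k = j} : Finset ι).image pos) := by
          refine card_le_card fun q hq => ?_
          rw [mem_Ico] at hq
          have hq' : q < Fintype.card ι := by linarith [(enum.symm a).2]
          refine mem_image.mpr ⟨enum ⟨q, hq'⟩, ?_, by simp [pos]⟩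
          simp only [mem_filter, mem_univ, true_and, pos, Equiv.symm_apply_apply]
          exact Nat.div_eq_of_lt_le (by linarith) (by linarith)
      _ ≤ _ := card_image_le
  calc (k : ℝ) * |x a| ≤ #{i | pos i / k = j} * |x a| := by gcongr
    _ ≤ ∑ i with pos i / k = j, |x i| := by
        rw [← nsmul_eq_mul]
        refine card_nsmul_le_sum _ _ _ fun b hb => ?_
        simp only [mem_filter, mem_univ, true_and] at hb
        simpa using hanti (enum.symm b) (enum.symm a) (hlt b hb).le

end SortedBlocks

section EuclideanSpace

variable {ι : Type*} [Fintype ι]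

lemma EuclideanSpace.real_norm_eq_sqrt (x : EuclideanSpace ℝ ι) : ‖x‖ = √(∑ i, x i ^ 2) := by
  rw [← EuclideanSpace.real_norm_sq_eq, Real.sqrt_sq (norm_nonneg x)]

lemma EuclideanSpace.inner_eq_zero_of_disjoint {u v : EuclideanSpace ℝ ι} {U V : Finset ι}
    (hu : ∀ i ∉ U, u i = 0) (hv : ∀ i ∉ V, v i = 0) (hUV : Disjoint U V) : ⟪u, v⟫ = 0 := by
  refine sum_eq_zero fun i _ => ?_
  by_cases hi : i ∈ U
  · simp [hv i (disjoint_left.mp hUV hi)]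
  · simp [hu i hi]

end EuclideanSpace

section restrictTo

variable {ι : Type*} [DecidableEq ι]

/-- The vector `x_W` of compressed sensing. -/
def restrictTo (W : Finset ι) (x : EuclideanSpace ℝ ι) : EuclideanSpace ℝ ι :=
  WithLp.toLp 2 fun i => if i ∈ W then x i else 0

@[simp]
lemma restrictTo_apply (W : Finset ι) (x : EuclideanSpace ℝ ι) (i : ι) :
    restrictTo W x i = if i ∈ W then x i else 0 :=
  rfl

lemma restrictTo_apply_of_notMem (W : Finset ι) (x : EuclideanSpace ℝ ι) :
    ∀ i ∉ W, restrictTo W x i = 0 :=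
  fun _ hi => if_neg hi

variable [Fintype ι]

lemma norm_restrictTo (W : Finset ι) (x : EuclideanSpace ℝ ι) :
    ‖restrictTo W x‖ = √(∑ i ∈ W, x i ^ 2) := by
  simp [EuclideanSpace.real_norm_eq_sqrt, ite_pow, sum_ite_mem]

lemma sum_abs_le_sqrt_card_mul_norm_restrictTo (W : Finset ι) (x : EuclideanSpace ℝ ι) :
    ∑ i ∈ W, |x i| ≤ √(#W : ℝ) * ‖restrictTo W x‖ := by
  rw [norm_restrictTo, ← Real.sqrt_mul (Nat.cast_nonneg _)]
  refine Real.le_sqrt_of_sq_le (sq_sum_le_card_mul_sum_sq.trans_eq ?_)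
  simp

theorem exists_block_decomposition (h : EuclideanSpace ℝ ι) (T : Finset ι) {k : ℕ} (hk : 0 < k) :
    ∃ S : ℕ → Finset ι, (∀ j, Disjoint T (S j)) ∧ Pairwise (Disjoint on S) ∧
      (∀ j, #(S j) ≤ k) ∧
      h = restrictTo T h + restrictTo (S 0) h +
        ∑ j ∈ range (Fintype.card ι), restrictTo (S (j + 1)) h ∧
      ∑ j ∈ range (Fintype.card ι), ‖restrictTo (S (j + 1)) h‖ ≤ (√k)⁻¹ * ∑ i ∈ Tᶜ, |h i| := by
  -- Sort `h` with its `T`-coordinates replaced by `0`, then drop `T` from every block.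
  obtain ⟨c, hc, hcard, hblock⟩ := exists_sorted_blocks (fun i => if i ∈ T then 0 else h i) hk
  set S : ℕ → Finset ι := fun j => {i ∈ Tᶜ | c i = j}
  have hS_sum : ∀ φ : ℝ → ℝ, φ 0 = 0 → ∀ j,
      ∑ i with c i = j, φ (if i ∈ T then 0 else h i) = ∑ i ∈ S j, φ (h i) := by
    intro φ hφ j
    rw [sum_filter, sum_filter, ← sum_add_sum_compl T,
      sum_eq_zero fun i hi => by simp [hi, hφ], zero_add]
    exact sum_congr rfl fun i hi => by simp [mem_compl.mp hi]
  refine ⟨S, fun j => ?_, fun j j' hjj' => ?_, fun j => ?_, ?_, ?_⟩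
  · exact disjoint_left.mpr fun i hiT hiS => mem_compl.mp (mem_filter.mp hiS).1 hiT
  · exact disjoint_left.mpr fun i hi hi' =>
      hjj' ((mem_filter.mp hi).2.symm.trans (mem_filter.mp hi').2)
  · exact (card_le_card fun i hi => by simp_all [S]).trans (hcard j)
  · ext i
    simp only [PiLp.add_apply, WithLp.ofLp_sum, Finset.sum_apply, restrictTo_apply]
    by_cases hiT : i ∈ T
    · simp [hiT, S]
    · have := sum_range_succ' (fun j => if c i = j then h i else 0) (Fintype.card ι)
      rw [sum_ite_eq, if_pos (mem_range.mpr ((hc i).trans (Nat.lt_succ_self _)))] at this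
      simp only [S, mem_filter, mem_compl, hiT, not_false_eq_true, true_and, if_false, zero_add]
      exact this.trans (add_comm _ _)
  · calc ∑ j ∈ range (Fintype.card ι), ‖restrictTo (S (j + 1)) h‖
        ≤ ∑ j ∈ range (Fintype.card ι), (√k)⁻¹ * ∑ i ∈ S j, |h i| := by
          refine sum_le_sum fun j _ => ?_
          rw [norm_restrictTo, ← hS_sum (· ^ 2) (by simp), ← hS_sum (|·|) abs_zero]
          exact hblock j
      _ = (√k)⁻¹ * ∑ i ∈ Tᶜ, |h i| := by
          rw [← mul_sum, sum_fiberwise_of_maps_to fun i _ => mem_range.mpr (hc i)]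

end restrictTo

section RIP

variable {ι F : Type*} [Fintype ι] [NormedAddCommGroup F] [InnerProductSpace ℝ F]

/-- The restricted isometry property of order `s` with constant `δ`. -/
def IsRIP (A : EuclideanSpace ℝ ι →ₗ[ℝ] F) (s : ℕ) (δ : ℝ) : Prop :=
  ∀ w : EuclideanSpace ℝ ι, #{i | w i ≠ 0} ≤ s →
    (1 - δ) * ‖w‖ ^ 2 ≤ ‖A w‖ ^ 2 ∧ ‖A w‖ ^ 2 ≤ (1 + δ) * ‖w‖ ^ 2

namespace IsRIP

variable {A : EuclideanSpace ℝ ι →ₗ[ℝ] F} {s : ℕ} {δ : ℝ}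

lemma norm_sq_bounds (hA : IsRIP A s δ) {w : EuclideanSpace ℝ ι} {W : Finset ι}
    (hw : ∀ i ∉ W, w i = 0) (hW : #W ≤ s) :
    (1 - δ) * ‖w‖ ^ 2 ≤ ‖A w‖ ^ 2 ∧ ‖A w‖ ^ 2 ≤ (1 + δ) * ‖w‖ ^ 2 := by
  refine hA w ((card_le_card fun i hi => ?_).trans hW)
  by_contra hiW
  exact (mem_filter.mp hi).2 (hw i hiW)

lemma abs_inner_le [DecidableEq ι] (hA : IsRIP A s δ) {u v : EuclideanSpace ℝ ι}
    {U V : Finset ι} (hu : ∀ i ∉ U, u i = 0) (hv : ∀ i ∉ V, v i = 0) (hUV : Disjoint U V)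
    (hs : #U + #V ≤ s) :
    |⟪A u, A v⟫| ≤ δ * ‖u‖ * ‖v‖ := by
  refine abs_inner_map_le_of_near_isometry A (EuclideanSpace.inner_eq_zero_of_disjoint hu hv hUV)
    fun a b => hA.norm_sq_bounds (W := U ∪ V) (fun i hi => ?_) ((card_union_le U V).trans hs)
  rw [mem_union, not_or] at hi
  simp [hu i hi.1, hv i hi.2]

theorem norm_le_of_cone [DecidableEq ι] {k : ℕ} {ε σ : ℝ} (hA : IsRIP A (2 * k) δ) (hk : 0 < k)
    (hδ : 0 ≤ δ) (hρ : 0 < 1 - (√2 + 1) * δ) {h : EuclideanSpace ℝ ι} {T : Finset ι}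
    (hT : #T ≤ k) (hcone : ∑ i ∈ Tᶜ, |h i| ≤ ∑ i ∈ T, |h i| + 2 * σ) (htube : ‖A h‖ ≤ 2 * ε) :
    ‖h‖ ≤ candesC₀ δ * ((√k)⁻¹ * σ) + candesC₁ δ * ε := by
  obtain ⟨S, hS_T, hS_S, hS_card, hdecomp, hblocks⟩ := exists_block_decomposition h T hk
  have hsum : ∑ j ∈ range (Fintype.card ι), ‖restrictTo (S (j + 1)) h‖
      ≤ ‖restrictTo T h‖ + 2 * ((√k)⁻¹ * σ) := by
    have hTk : √(#T : ℝ) ≤ √k := Real.sqrt_le_sqrt (by exact_mod_cast hT)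
    have hT_l1 := sum_abs_le_sqrt_card_mul_norm_restrictTo T h
    calc _ ≤ (√k)⁻¹ * ∑ i ∈ Tᶜ, |h i| := hblocks
      _ ≤ (√k)⁻¹ * (√k * ‖restrictTo T h‖ + 2 * σ) := by
          gcongr
          nlinarith [norm_nonneg (restrictTo T h)]
      _ = ‖restrictTo T h‖ + 2 * ((√k)⁻¹ * σ) := by
          rw [mul_add, inv_mul_cancel_left₀ (by positivity)]
          ring
  have hsupp := restrictTo_apply_of_notMem (x := h)
  have hcard : ∀ {U V : Finset ι}, #U ≤ k → #V ≤ k → #U + #V ≤ 2 * k := by omega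
  have h01 := hA.norm_sq_bounds (W := T ∪ S 0) (w := restrictTo T h + restrictTo (S 0) h)
    (fun i hi => by rw [mem_union, not_or] at hi; simp [hi.1, hi.2])
    ((card_union_le _ _).trans (hcard hT (hS_card 0)))
  rw [hdecomp] at htube ⊢
  exact norm_le_of_near_isometry_of_cone A hδ hρ
    (EuclideanSpace.inner_eq_zero_of_disjoint (hsupp _) (hsupp _) (hS_T 0)) h01.1 h01.2
    (fun j _ => hA.abs_inner_le (hsupp _) (hsupp _) (hS_T _) (hcard hT (hS_card _)))
    (fun j _ => hA.abs_inner_le (hsupp _) (hsupp _) (hS_S j.succ_ne_zero.symm)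
      (hcard (hS_card _) (hS_card _)))
    htube hsum

end IsRIP

end RIP

lemma sum_compl_abs_sub_le_of_sum_abs_le {ι : Type*} [Fintype ι] [DecidableEq ι]
    {x y : ι → ℝ} (T : Finset ι) (hxy : ∑ i, |y i| ≤ ∑ i, |x i|) :
    ∑ i ∈ Tᶜ, |y i - x i| ≤ ∑ i ∈ T, |y i - x i| + 2 * ∑ i ∈ Tᶜ, |x i| := by
  have hT : ∑ i ∈ T, (|x i| - |y i - x i|) ≤ ∑ i ∈ T, |y i| := sum_le_sum fun i _ => by
    linarith [abs_sub_abs_le_abs_sub (x i) (y i), abs_sub_comm (x i) (y i)]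
  have hTc : ∑ i ∈ Tᶜ, (|y i - x i| - |x i|) ≤ ∑ i ∈ Tᶜ, |y i| :=
    sum_le_sum fun i _ => by linarith [abs_sub (y i) (x i)]
  rw [← sum_add_sum_compl T (|y ·|), ← sum_add_sum_compl T (|x ·|)] at hxy
  rw [sum_sub_distrib] at hT hTc
  linarith

lemma Matrix.isRIP_toEuclideanLin {m N s : ℕ} {δ : ℝ} {Φ : Matrix (Fin m) (Fin N) ℝ}
    (hΦ : ∀ w : Fin N → ℝ, #{j | w j ≠ 0} ≤ s →
      (1 - δ) * ∑ j, w j ^ 2 ≤ ∑ i, Φ.mulVec w i ^ 2 ∧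
        ∑ i, Φ.mulVec w i ^ 2 ≤ (1 + δ) * ∑ j, w j ^ 2) :
    IsRIP (Matrix.toEuclideanLin Φ) s δ := fun w hw => by
  simpa only [EuclideanSpace.real_norm_sq_eq, Matrix.toLpLin_apply] using hΦ w.ofLp hw

theorem stmt15 (δ : ℝ) (hδ0 : 0 < δ) (hδ1 : δ < Real.sqrt 2 - 1) :
    ∃ C₀ C₁ : ℝ, ∀ (n N k : ℕ), 1 ≤ k →
      ∀ Φ : Matrix (Fin n) (Fin N) ℝ,
      (∀ w : Fin N → ℝ, (Finset.univ.filter (fun j => w j ≠ 0)).card ≤ 2 * k →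
        (1 - δ) * ∑ j, (w j) ^ 2 ≤ ∑ i, (Φ.mulVec w i) ^ 2 ∧
        ∑ i, (Φ.mulVec w i) ^ 2 ≤ (1 + δ) * ∑ j, (w j) ^ 2) →
      ∀ x : Fin N → ℝ, ∀ ε : ℝ, 0 ≤ ε →
      ∀ z : Fin n → ℝ, Real.sqrt (∑ i, (z i) ^ 2) ≤ ε →
      -- `T` is a set of `k` coordinates of largest absolute value, so that
      -- `x_{(k)} = fun j => if j ∈ T then x j else 0`
      ∀ T : Finset (Fin N), T.card = min k N →
        (∀ i ∈ T, ∀ j ∉ T, |x j| ≤ |x i|) →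
      ∀ xstar : Fin N → ℝ,
        Real.sqrt (∑ i, ((Φ.mulVec x i + z i) - Φ.mulVec xstar i) ^ 2) ≤ ε →
        (∀ w : Fin N → ℝ,
          Real.sqrt (∑ i, ((Φ.mulVec x i + z i) - Φ.mulVec w i) ^ 2) ≤ ε →
          ∑ j, |xstar j| ≤ ∑ j, |w j|) →
        Real.sqrt (∑ j, (xstar j - x j) ^ 2)
          ≤ C₀ * (Real.sqrt k)⁻¹ * (∑ j, |x j - (if j ∈ T then x j else 0)|) + C₁ * ε := by
  have hρ : 0 < 1 - (√2 + 1) * δ := by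
    have : (√2 + 1) * (√2 - 1) = 1 := by ring_nf; norm_num
    nlinarith [Real.sqrt_nonneg 2]
  refine ⟨candesC₀ δ, candesC₁ δ, fun n N k hk Φ hRIP x ε _ z hz T hT _ xstar hfeas hmin => ?_⟩
  have hnorm : ∀ {m : ℕ} (w : Fin m → ℝ),
      √(∑ i, w i ^ 2) = ‖(WithLp.toLp 2 w : EuclideanSpace ℝ (Fin m))‖ :=
    fun w => (EuclideanSpace.real_norm_eq_sqrt _).symm
  set h : EuclideanSpace ℝ (Fin N) := WithLp.toLp 2 (xstar - x)
  have htube : ‖Matrix.toEuclideanLin Φ h‖ ≤ 2 * ε := by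
    rw [hnorm] at hz hfeas
    calc _ = ‖WithLp.toLp 2 z - WithLp.toLp 2 fun i => Φ.mulVec x i + z i - Φ.mulVec xstar i‖ := by
          congr 1
          ext i
          simp [h, Matrix.toLpLin_apply, Matrix.mulVec_sub]
          ring
      _ ≤ 2 * ε := (norm_sub_le _ _).trans (by linarith)
  have hcone := sum_compl_abs_sub_le_of_sum_abs_le T (hmin x (by simpa using hz))
  have hrhs : ∑ j, |x j - (if j ∈ T then x j else 0)| = ∑ i ∈ Tᶜ, |x i| := by
    rw [← sum_add_sum_compl T, sum_eq_zero fun j hj => by simp [hj], zero_add]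
    exact sum_congr rfl fun j hj => by simp [mem_compl.mp hj]
  rw [hnorm, hrhs, mul_assoc]
  exact (Matrix.isRIP_toEuclideanLin hRIP).norm_le_of_cone hk hδ0.le hρ (h := h)
    (hT ▸ min_le_left k N) hcone htube
end
end
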